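/- For every d ≥ 1 and m ≥ 1, every vector-valued function f = (f_1, …, f_m) with each component f_i ∈ L¹(I_d) measurable, and every ε > 0, there exist an integer n ≥ 1, shared hidden-layer weights w_1, …, w_n ∈ ℝ^d, biases b_1, …, b_n ∈ ℝ, and output weights α_{ij} ∈ ℝ such that the multi-output ReLU network g_i(x) = Σ_{j=1}^n α_{ij} · ReLU(w_jᵀ x + b_j) satisfies, for every i = 1, …, m, ∫_{I_d} |softmax(g(x))_i − softmax(f(x))_i| dx < ε, where g(x) = (g_1(x), …, g_m(x)). -/

import Mathlib

open MeasureTheory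

/-- ReLU activation: `ReLU t = max t 0`. -/
noncomputable def ReLU (t : ℝ) : ℝ := max t 0

/-- Softmax of a vector `y ∈ ℝ^m`: `softmax y i = exp (y i) / ∑ k, exp (y k)`. -/
noncomputable def softmax {m : ℕ} (y : Fin m → ℝ) (i : Fin m) : ℝ :=
  Real.exp (y i) / ∑ k, Real.exp (y k)

/-!
Softmax is Lipschitz (`|softmax y i - softmax z i| ≤ 4 ‖y - z‖₁`), so it suffices to approximate
each `f i` in `L¹` of the cube by a ReLU network and then merge the `m` networks into one with a
shared hidden layer (the union of their hidden units). For the `L¹` approximation, first pass to a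
continuous function, then approximate uniformly: the cosine ridge functions `cos (⟪w, x⟫ + b)`
span a point-separating algebra (product-to-sum formula), hence are uniformly dense on compacta by
Stone–Weierstrass, and each of them is a uniform limit of ReLU networks, namely of piecewise linear
interpolants of `cos` composed with the ridge `⟪w, x⟫ + b`.
-/

open Real Set Submodule

theorem abs_exp_sub_exp_le (a b : ℝ) : |exp a - exp b| ≤ (exp a + exp b) * |a - b| := by
  wlog hba : b ≤ a generalizing a b
  · rw [abs_sub_comm, abs_sub_comm a, add_comm]
    exact this b a (le_of_not_ge hba)
  have h : exp a - exp b ≤ exp a * (a - b) := by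
    nlinarith [add_one_le_exp (b - a), exp_pos a,
      show exp b = exp a * exp (b - a) by rw [← exp_add]; ring_nf]
  rw [abs_of_nonneg (sub_nonneg.2 (exp_le_exp.2 hba)), abs_of_nonneg (sub_nonneg.2 hba)]
  nlinarith [exp_pos b]

theorem abs_softmax_sub_softmax_le {m : ℕ} (y z : Fin m → ℝ) (i : Fin m) :
    |softmax y i - softmax z i| ≤ 4 * ∑ k, |y k - z k| := by
  set Y := ∑ k, exp (y k)
  set Z := ∑ k, exp (z k)
  set S := ∑ k, |y k - z k|
  have hY : 0 < Y := Finset.sum_pos (fun k _ => exp_pos _) ⟨i, Finset.mem_univ i⟩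
  have hZ : 0 < Z := Finset.sum_pos (fun k _ => exp_pos _) ⟨i, Finset.mem_univ i⟩
  have hyY : exp (y i) ≤ Y :=
    Finset.single_le_sum (f := fun k => exp (y k)) (fun k _ => (exp_pos _).le) (Finset.mem_univ i)
  have hzZ : exp (z i) ≤ Z :=
    Finset.single_le_sum (f := fun k => exp (z k)) (fun k _ => (exp_pos _).le) (Finset.mem_univ i)
  have hS : ∀ k, |y k - z k| ≤ S := fun k =>
    Finset.single_le_sum (f := fun k => |y k - z k|) (fun k _ => abs_nonneg _) (Finset.mem_univ k)
  -- after cross-multiplying, `exp (y i + z k)` is paired with `exp (z i + y k)`, and the two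
  -- exponents are `2 S`-close
  have hnum : |exp (y i) * Z - exp (z i) * Y| ≤ 2 * S * (exp (y i) * Z + exp (z i) * Y) := by
    simp only [Y, Z, Finset.mul_sum, ← exp_add, ← Finset.sum_sub_distrib, ← Finset.sum_add_distrib]
    refine (Finset.abs_sum_le_sum_abs _ _).trans (Finset.sum_le_sum fun k _ => ?_)
    refine (abs_exp_sub_exp_le _ _).trans ?_
    rw [mul_comm]
    gcongr
    calc |y i + z k - (z i + y k)| = |(y i - z i) - (y k - z k)| := by ring_nf
      _ ≤ |y i - z i| + |y k - z k| := abs_sub _ _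
      _ ≤ 2 * S := by linarith [hS i, hS k]
  have hS0 : 0 ≤ S := Finset.sum_nonneg fun k _ => abs_nonneg _
  rw [softmax, softmax, div_sub_div _ _ hY.ne' hZ.ne', abs_div, abs_of_pos (mul_pos hY hZ),
    div_le_iff₀ (mul_pos hY hZ)]
  calc |exp (y i) * Z - Y * exp (z i)| ≤ 2 * S * (exp (y i) * Z + exp (z i) * Y) := by
        rw [mul_comm Y]; exact hnum
    _ ≤ 2 * S * (Y * Z + Z * Y) := by gcongr
    _ = 4 * S * (Y * Z) := by ring

theorem integral_abs_softmax_sub_le {X : Type*} [MeasurableSpace X] {μ : Measure X} {m : ℕ}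
    {g f : Fin m → X → ℝ} (hgf : ∀ k, Integrable (fun x => g k x - f k x) μ) (i : Fin m) :
    ∫ x, |softmax (fun k => g k x) i - softmax (fun k => f k x) i| ∂μ ≤
      4 * ∑ k, ∫ x, |g k x - f k x| ∂μ := by
  rw [← integral_finsetSum _ fun k _ => (hgf k).abs, ← integral_const_mul]
  exact integral_mono_of_nonneg (ae_of_all _ fun _ => abs_nonneg _)
    ((integrable_finsetSum _ fun k _ => (hgf k).abs).const_mul 4)
    (ae_of_all _ fun x => abs_softmax_sub_softmax_le _ _ i)

theorem exists_common_fin_sum_of_mem_span_range {R M ι : Type*} [CommSemiring R]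
    [AddCommMonoid M] [Module R M] [Nonempty ι] {m : ℕ} (v : ι → M) (g : Fin m → M)
    (hg : ∀ i, g i ∈ span R (range v)) :
    ∃ n, 1 ≤ n ∧ ∃ (u : Fin n → ι) (α : Fin m → Fin n → R), ∀ i, g i = ∑ j, α i j • v (u j) := by
  classical
  choose c hc using fun i => Finsupp.mem_span_range_iff_exists_finsupp.1 (hg i)
  set S := insert (Classical.arbitrary ι) (Finset.univ.biUnion fun i => (c i).support)
  refine ⟨S.card, Finset.card_pos.2 (Finset.insert_nonempty _ _), fun j => S.equivFin.symm j,
    fun i j => c i (S.equivFin.symm j), fun i => ?_⟩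
  have hsupp : (c i).support ⊆ S :=
    (Finset.subset_biUnion_of_mem (fun i => (c i).support) (Finset.mem_univ i)).trans
      (Finset.subset_insert _ _)
  rw [← hc i, Finsupp.sum_of_support_subset _ hsupp _ (fun j _ => zero_smul R (v j)),
    ← Finset.sum_coe_sort S, ← S.equivFin.symm.sum_comp]

noncomputable section

def tent (s : ℝ) : ℝ := ReLU (s + 1) - 2 * ReLU s + ReLU (s - 1)

theorem tent_eq (s : ℝ) : tent s = max (1 - |s|) 0 := by
  simp only [tent, ReLU, max_def, abs_eq_max_neg]
  split_ifs <;> linarith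

theorem tent_nonneg (s : ℝ) : 0 ≤ tent s := tent_eq s ▸ le_max_right _ _

theorem tent_eq_zero_of_one_le_abs {s : ℝ} (hs : 1 ≤ |s|) : tent s = 0 := by
  rw [tent_eq, max_eq_right (by linarith)]

theorem sum_range_tent_sub (N : ℕ) {u : ℝ} (hu : u ∈ Icc 0 (N : ℝ)) :
    ∑ j ∈ Finset.range (N + 1), tent (u - j) = 1 := by
  -- `tent` is the difference `ramp s - ramp (s - 1)` of the clamped ramp, so the sum telescopes
  set ramp : ℝ → ℝ := fun s => ReLU (s + 1) - ReLU s
  have htent : ∀ j : ℕ, tent (u - j) = ramp (u - j) - ramp (u - (j + 1 : ℕ)) := fun j => by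
    simp only [tent, ramp, Nat.cast_succ]; ring_nf
  have hramp0 : ramp u = 1 := by
    simp only [ramp, ReLU]; rw [max_eq_left, max_eq_left] <;> linarith [hu.1]
  have hramp1 : ramp (u - (N + 1 : ℕ)) = 0 := by
    simp only [ramp, ReLU, Nat.cast_succ]; rw [max_eq_right, max_eq_right] <;> linarith [hu.2]
  rw [Finset.sum_congr rfl fun j _ => htent j, Finset.sum_range_sub', Nat.cast_zero, sub_zero,
    hramp0, hramp1, sub_zero]

/-- Piecewise linear interpolation of `φ` at the nodes `a + j h`, `j = 0, …, N`. -/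
theorem abs_sum_mul_tent_sub_le {φ : ℝ → ℝ} {a h ε : ℝ} (hh : 0 < h)
    (hφ : ∀ s t, |s - t| ≤ h → |φ s - φ t| ≤ ε) (N : ℕ) {t : ℝ} (ht : t ∈ Icc a (a + N * h)) :
    |∑ j ∈ Finset.range (N + 1), φ (a + j * h) * tent ((t - a) / h - j) - φ t| ≤ ε := by
  set u := (t - a) / h
  have hu : u ∈ Icc 0 (N : ℝ) := by
    refine ⟨div_nonneg (by linarith [ht.1]) hh.le, (div_le_iff₀ hh).2 (by linarith [ht.2])⟩
  have hsum := sum_range_tent_sub N hu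
  calc |∑ j ∈ Finset.range (N + 1), φ (a + j * h) * tent (u - j) - φ t|
      = |∑ j ∈ Finset.range (N + 1), (φ (a + j * h) - φ t) * tent (u - j)| := by
        simp only [sub_mul, Finset.sum_sub_distrib, ← Finset.mul_sum, hsum, mul_one]
    _ ≤ ∑ j ∈ Finset.range (N + 1), ε * tent (u - j) := by
        refine (Finset.abs_sum_le_sum_abs _ _).trans (Finset.sum_le_sum fun j _ => ?_)
        rw [abs_mul, abs_of_nonneg (tent_nonneg _)]
        rcases lt_or_ge |u - j| 1 with hj | hj
        · refine mul_le_mul_of_nonneg_right (hφ _ _ ?_) (tent_nonneg _)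
          have : a + j * h - t = -(h * (u - j)) := by simp only [u]; field_simp; ring
          rw [this, abs_neg, abs_mul, abs_of_pos hh]
          nlinarith [abs_nonneg (u - j)]
        · simp [tent_eq_zero_of_one_le_abs hj]
    _ = ε := by rw [← Finset.mul_sum, hsum, mul_one]

variable {d : ℕ}

theorem continuous_ReLU : Continuous ReLU := continuous_id.max continuous_const

def ridge (p : (Fin d → ℝ) × ℝ) : C(Fin d → ℝ, ℝ) :=
  ⟨fun x => ∑ k, p.1 k * x k + p.2, by fun_prop⟩

def reluRidge (p : (Fin d → ℝ) × ℝ) : C(Fin d → ℝ, ℝ) :=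
  ⟨fun x => ReLU (ridge p x), continuous_ReLU.comp (ridge p).continuous⟩

variable (d) in
def reluNet : Submodule ℝ C(Fin d → ℝ, ℝ) := span ℝ (range reluRidge)

theorem ridge_apply (p : (Fin d → ℝ) × ℝ) (x : Fin d → ℝ) :
    ridge p x = ∑ k, p.1 k * x k + p.2 :=
  rfl

theorem ridge_smul_add (p : (Fin d → ℝ) × ℝ) (a e : ℝ) (x : Fin d → ℝ) :
    ridge (a • p.1, a * p.2 + e) x = a * ridge p x + e := by
  simp only [ridge_apply, Pi.smul_apply, smul_eq_mul, mul_add, Finset.mul_sum, mul_assoc]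
  ring

theorem reluRidge_mem_reluNet (p : (Fin d → ℝ) × ℝ) : reluRidge p ∈ reluNet d :=
  subset_span (mem_range_self p)

def tentRidge (p : (Fin d → ℝ) × ℝ) : C(Fin d → ℝ, ℝ) :=
  reluRidge (p.1, p.2 + 1) - (2 : ℝ) • reluRidge p + reluRidge (p.1, p.2 - 1)

theorem tentRidge_apply (p : (Fin d → ℝ) × ℝ) (x : Fin d → ℝ) :
    tentRidge p x = tent (ridge p x) := by
  simp only [tentRidge, tent, ContinuousMap.add_apply, ContinuousMap.sub_apply,
    ContinuousMap.smul_apply, reluRidge, ContinuousMap.coe_mk, ridge_apply, smul_eq_mul]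
  ring_nf

theorem tentRidge_mem_reluNet (p : (Fin d → ℝ) × ℝ) : tentRidge p ∈ reluNet d :=
  add_mem (sub_mem (reluRidge_mem_reluNet _) (smul_mem _ _ (reluRidge_mem_reluNet _)))
    (reluRidge_mem_reluNet _)

def cosRidge (p : (Fin d → ℝ) × ℝ) : C(Fin d → ℝ, ℝ) :=
  ⟨fun x => cos (ridge p x), continuous_cos.comp (ridge p).continuous⟩

theorem exists_mem_reluNet_abs_sub_cosRidge_le (p : (Fin d → ℝ) × ℝ) (R : ℝ) {ε : ℝ}
    (hε : 0 < ε) : ∃ g ∈ reluNet d, ∀ x, |ridge p x| ≤ R → |g x - cosRidge p x| ≤ ε := by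
  obtain ⟨N, hN⟩ := exists_nat_ge (2 * R / ε)
  -- `tentRidge (ε⁻¹ • p.1, ε⁻¹ * p.2 + (R / ε - j))` is `x ↦ tent ((ridge p x + R) / ε - j)`
  refine ⟨∑ j ∈ Finset.range (N + 1),
      cos (-R + j * ε) • tentRidge (ε⁻¹ • p.1, ε⁻¹ * p.2 + (R / ε - j)),
    sum_mem fun j _ => smul_mem _ _ (tentRidge_mem_reluNet _), fun x hx => ?_⟩
  have hnodes : ridge p x ∈ Icc (-R) (-R + N * ε) := by
    rw [div_le_iff₀ hε] at hN
    exact ⟨by linarith [neg_abs_le (ridge p x)], by linarith [le_abs_self (ridge p x)]⟩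
  convert abs_sum_mul_tent_sub_le hε (fun s t hst => (abs_cos_sub_cos_le s t).trans hst) N hnodes
    using 3
  · simp only [ContinuousMap.coe_sum, ContinuousMap.coe_smul, Finset.sum_apply, Pi.smul_apply,
      smul_eq_mul, tentRidge_apply, ridge_smul_add]
    refine Finset.sum_congr rfl fun j _ => ?_
    congr 2
    field_simp
    ring
  · rfl

theorem ridge_add (p q : (Fin d → ℝ) × ℝ) (x : Fin d → ℝ) :
    ridge (p + q) x = ridge p x + ridge q x := by
  simp only [ridge_apply, Prod.fst_add, Prod.snd_add, Pi.add_apply, add_mul,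
    Finset.sum_add_distrib]
  ring

theorem ridge_sub (p q : (Fin d → ℝ) × ℝ) (x : Fin d → ℝ) :
    ridge (p - q) x = ridge p x - ridge q x := by
  simp only [ridge_apply, Prod.fst_sub, Prod.snd_sub, Pi.sub_apply, sub_mul,
    Finset.sum_sub_distrib]
  ring

theorem cosRidge_zero : cosRidge (0 : (Fin d → ℝ) × ℝ) = 1 := by
  ext x
  simp [cosRidge, ridge_apply]

theorem cosRidge_mul_cosRidge (p q : (Fin d → ℝ) × ℝ) :
    cosRidge p * cosRidge q = (2⁻¹ : ℝ) • cosRidge (p + q) + (2⁻¹ : ℝ) • cosRidge (p - q) := by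
  ext x
  simp only [cosRidge, ContinuousMap.mul_apply, ContinuousMap.add_apply, ContinuousMap.smul_apply,
    ContinuousMap.coe_mk, smul_eq_mul, ridge_add, ridge_sub, cos_add, cos_sub]
  ring

theorem span_cosRidge_mul_le :
    span ℝ (range (cosRidge (d := d))) * span ℝ (range cosRidge) ≤ span ℝ (range cosRidge) := by
  rw [span_mul_span, span_le]
  rintro _ ⟨_, ⟨p, rfl⟩, _, ⟨q, rfl⟩, rfl⟩
  change cosRidge p * cosRidge q ∈ _
  rw [cosRidge_mul_cosRidge]
  exact add_mem (smul_mem _ _ (subset_span ⟨_, rfl⟩)) (smul_mem _ _ (subset_span ⟨_, rfl⟩))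

variable (d) in
def cosRidgeAlgebra : Subalgebra ℝ C(Fin d → ℝ, ℝ) :=
  (span ℝ (range cosRidge)).toSubalgebra (cosRidge_zero ▸ subset_span ⟨0, rfl⟩)
    fun _ _ hf hg => span_cosRidge_mul_le (mul_mem_mul hf hg)

abbrev restrictAlgHom (K : Set (Fin d → ℝ)) : C(Fin d → ℝ, ℝ) →ₐ[ℝ] C(K, ℝ) :=
  ContinuousMap.compRightAlgHom ℝ ℝ ⟨Subtype.val, continuous_subtype_val⟩

theorem separatesPoints_map_cosRidgeAlgebra (K : Set (Fin d → ℝ)) :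
    ((cosRidgeAlgebra d).map (restrictAlgHom K)).SeparatesPoints := by
  intro x y hxy
  obtain ⟨k, hk⟩ : ∃ k, (x : Fin d → ℝ) k ≠ (y : Fin d → ℝ) k := by
    by_contra! h
    exact hxy (Subtype.ext (funext h))
  -- the ridge `c (z k - y k)` vanishes at `y` and equals `π / 2` at `x`
  set c := π / 2 / ((x : Fin d → ℝ) k - (y : Fin d → ℝ) k)
  set p : (Fin d → ℝ) × ℝ := (c • Pi.single k 1, -(c * (y : Fin d → ℝ) k))
  have hp : ∀ z : Fin d → ℝ, ridge p z = c * (z k - (y : Fin d → ℝ) k) := fun z => by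
    simp [p, ridge_apply, Pi.single_apply]
    ring
  refine ⟨_, ⟨restrictAlgHom K (cosRidge p), ⟨cosRidge p, subset_span ⟨p, rfl⟩, rfl⟩, rfl⟩, ?_⟩
  show cos (ridge p x) ≠ cos (ridge p y)
  rw [hp, hp, sub_self, mul_zero, cos_zero, div_mul_cancel₀ _ (sub_ne_zero.2 hk), cos_pi_div_two]
  exact zero_ne_one

theorem restrict_cosRidge_mem_closure (K : Set (Fin d → ℝ)) [CompactSpace K]
    (p : (Fin d → ℝ) × ℝ) :
    restrictAlgHom K (cosRidge p) ∈
      closure ((reluNet d).map (restrictAlgHom K).toLinearMap : Set C(K, ℝ)) := by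
  rw [Metric.mem_closure_iff]
  intro ε hε
  obtain ⟨g, hg, hgp⟩ :=
    exists_mem_reluNet_abs_sub_cosRidge_le p ‖restrictAlgHom K (ridge p)‖ (half_pos hε)
  refine ⟨restrictAlgHom K g, mem_map_of_mem hg, ?_⟩
  refine lt_of_le_of_lt ((ContinuousMap.dist_le (half_pos hε).le).2 fun x => ?_) (half_lt_self hε)
  rw [dist_comm, Real.dist_eq]
  exact hgp x (by simpa using (restrictAlgHom K (ridge p)).norm_coe_le_norm x)

theorem dense_reluNet_restrict (K : Set (Fin d → ℝ)) [CompactSpace K] :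
    Dense ((reluNet d).map (restrictAlgHom K).toLinearMap : Set C(K, ℝ)) := by
  have hcos : ((cosRidgeAlgebra d).map (restrictAlgHom K) : Set C(K, ℝ)) ⊆
      closure ((reluNet d).map (restrictAlgHom K).toLinearMap) := by
    rintro _ ⟨f, hf, rfl⟩
    refine (span_le (p := ((reluNet d).map (restrictAlgHom K).toLinearMap).topologicalClosure.comap
      (restrictAlgHom K).toLinearMap) |>.2 ?_) hf
    rintro _ ⟨p, rfl⟩
    exact restrict_cosRidge_mem_closure K p
  intro f
  have hf : f ∈ ((cosRidgeAlgebra d).map (restrictAlgHom K)).topologicalClosure := by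
    rw [ContinuousMap.subalgebra_topologicalClosure_eq_top_of_separatesPoints _
      (separatesPoints_map_cosRidgeAlgebra K)]
    trivial
  exact closure_minimal hcos isClosed_closure hf

theorem exists_mem_reluNet_forall_abs_sub_lt {K : Set (Fin d → ℝ)} (hK : IsCompact K)
    (h : C(Fin d → ℝ, ℝ)) {ε : ℝ} (hε : 0 < ε) :
    ∃ g ∈ reluNet d, ∀ x ∈ K, |g x - h x| < ε := by
  have := isCompact_iff_compactSpace.mp hK
  obtain ⟨_, ⟨g, hg, rfl⟩, hgh⟩ :=
    Metric.mem_closure_iff.1 (dense_reluNet_restrict K (restrictAlgHom K h)) ε hε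
  refine ⟨g, hg, fun x hx => ?_⟩
  rw [dist_comm] at hgh
  simpa [Real.dist_eq] using (ContinuousMap.dist_lt_iff hε).1 hgh ⟨x, hx⟩

theorem exists_mem_reluNet_integral_abs_sub_lt {μ : Measure (Fin d → ℝ)} [μ.Regular]
    {K : Set (Fin d → ℝ)} (hK : IsCompact K) {f : (Fin d → ℝ) → ℝ} (hf : IntegrableOn f K μ)
    {ε : ℝ} (hε : 0 < ε) : ∃ g ∈ reluNet d, ∫ x in K, |g x - f x| ∂μ < ε := by
  have hKm := hK.measurableSet
  have : IsFiniteMeasure (μ.restrict K) := isFiniteMeasure_restrict.2 hK.measure_lt_top.ne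
  obtain ⟨h, -, hfh, hcont, hint⟩ :=
    (hf.integrable_indicator hKm).exists_hasCompactSupport_integral_sub_le (half_pos hε)
  set η := ε / (2 * (μ.real K + 1))
  have hη : 0 < η := by positivity
  obtain ⟨g, hg, hgh⟩ := exists_mem_reluNet_forall_abs_sub_lt hK ⟨h, hcont⟩ hη
  have hfh_int : Integrable (fun x => ‖K.indicator f x - h x‖) μ :=
    ((hf.integrable_indicator hKm).sub hint).norm
  refine ⟨g, hg, ?_⟩
  calc ∫ x in K, |g x - f x| ∂μ ≤ ∫ x in K, (η + ‖K.indicator f x - h x‖) ∂μ := by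
        refine integral_mono_of_nonneg (ae_of_all _ fun _ => abs_nonneg _)
          ((integrable_const η).add hfh_int.integrableOn.integrable) ?_
        refine (ae_restrict_iff' hKm).2 (ae_of_all _ fun x hx => ?_)
        have := hgh x hx
        dsimp only
        rw [indicator_of_mem hx, Real.norm_eq_abs]
        calc |g x - f x| ≤ |g x - h x| + |h x - f x| := abs_sub_le _ _ _
          _ ≤ η + |f x - h x| := by rw [abs_sub_comm (h x)]; exact add_le_add_left this.le _
    _ = η * μ.real K + ∫ x in K, ‖K.indicator f x - h x‖ ∂μ := by
        rw [integral_add (integrable_const η) hfh_int.integrableOn, setIntegral_const, smul_eq_mul,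
          mul_comm]
    _ ≤ η * μ.real K + ε / 2 := by
        gcongr
        exact (setIntegral_le_integral hfh_int (ae_of_all _ fun _ => norm_nonneg _)).trans hfh
    _ < ε := by
        have : η * μ.real K < ε / 2 := by
          rw [div_mul_eq_mul_div, div_lt_div_iff₀ (by positivity) two_pos]
          nlinarith [measureReal_nonneg (μ := μ) (s := K)]
        linarith

end

theorem softmax_relu_network_approximates_softmax_general
    (d m : ℕ)
    (f : Fin m → (Fin d → ℝ) → ℝ)
    (hf : ∀ i, IntegrableOn (f i) (Set.Icc (0 : Fin d → ℝ) 1))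
    (ε : ℝ) (hε : 0 < ε) :
    ∃ (n : ℕ), 1 ≤ n ∧ ∃ (w : Fin n → Fin d → ℝ) (b : Fin n → ℝ)
      (α : Fin m → Fin n → ℝ),
      ∀ i, ∫ x in Set.Icc (0 : Fin d → ℝ) 1,
        |softmax (fun i' => ∑ j, α i' j * ReLU (∑ k, w j k * x k + b j)) i -
          softmax (fun i' => f i' x) i| < ε := by
  have hη : 0 < ε / (4 * (m + 1)) := by positivity
  choose g hg hgf using fun i => exists_mem_reluNet_integral_abs_sub_lt isCompact_Icc (hf i) hη
  obtain ⟨n, hn, u, α, hgα⟩ := exists_common_fin_sum_of_mem_span_range reluRidge g hg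
  refine ⟨n, hn, fun j => (u j).1, fun j => (u j).2, α, fun i => ?_⟩
  have hnet : ∀ i x, ∑ j, α i j * ReLU (∑ k, (u j).1 k * x k + (u j).2) = g i x := fun i x => by
    simp [hgα i, reluRidge, ridge_apply]
  simp only [hnet]
  calc _ ≤ 4 * ∑ k, ∫ x in Icc 0 1, |g k x - f k x| :=
        integral_abs_softmax_sub_le
          (fun k => ((g k).continuous.continuousOn.integrableOn_compact isCompact_Icc).sub (hf k)) i
    _ ≤ 4 * ∑ _k : Fin m, ε / (4 * (m + 1)) := by gcongr with k; exact (hgf k).le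
    _ < ε := by
        rw [Finset.sum_const, Finset.card_univ, Fintype.card_fin, nsmul_eq_mul,
          mul_div_assoc', mul_div_assoc', div_lt_iff₀ (by positivity)]
        nlinarith

/-- **Softmax outputs of a ReLU network approximate softmax of any L¹ target.**
For every `d ≥ 1`, `m ≥ 1`, every measurable `f = (f_1, …, f_m)` with each component
in `L¹(I_d)`, and every `ε > 0`, there is a single-hidden-layer ReLU network with shared
hidden weights such that, for every `i`,
`∫_{I_d} |softmax (g x) i - softmax (f x) i| dx < ε`,
where `g x i = ∑ j, α i j * ReLU (⟪w j, x⟫ + b j)`. -/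
theorem softmax_relu_network_approximates_softmax
    (d m : ℕ) (hd : 1 ≤ d) (hm : 1 ≤ m)
    (f : Fin m → (Fin d → ℝ) → ℝ)
    (hfmeas : ∀ i, Measurable (f i))
    (hf : ∀ i, IntegrableOn (f i) (Set.Icc (0 : Fin d → ℝ) 1))
    (ε : ℝ) (hε : 0 < ε) :
    ∃ (n : ℕ), 1 ≤ n ∧ ∃ (w : Fin n → Fin d → ℝ) (b : Fin n → ℝ)
      (α : Fin m → Fin n → ℝ),
      ∀ i, ∫ x in Set.Icc (0 : Fin d → ℝ) 1,
        |softmax (fun i' => ∑ j, α i' j * ReLU (∑ k, w j k * x k + b j)) i -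
          softmax (fun i' => f i' x) i| < ε :=
  softmax_relu_network_approximates_softmax_general d m f hf ε hε
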